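/- Assume there are at least two distinct agents. For every epistemic model M=(W,∼,V) with equivalence relations ∼_a, every state s ∈ W, and every word α: s,ε ⊨ ⟨α⟩ empty if and only if α = ε, where empty := ⋀_{a∈A}[a]⊥ ∧ ⋀_{a,b∈A} K_a[b]⊥. -/

import Mathlib

/-- Words over the alphabet `A ⊕ F` (agents and formulas). -/
abbrev Word (A F : Type) := List (A ⊕ F)

/-- The agent occurrences of a word, in order. -/
def wAgents {A F : Type} (w : Word A F) : List A := w.filterMap Sum.getLeft?

/-- The formula occurrences of a word, in order (the projection `α↾_!`). -/
def wForms {A F : Type} (w : Word A F) : List F := w.filterMap Sum.getRight?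

/-- `|α|_a`: the number of occurrences of agent `a` in `α`. -/
def wcountA {A F : Type} [DecidableEq A] (w : Word A F) (a : A) : ℕ := (wAgents w).count a

/-- `|α|_!`: the number of formula occurrences in `α`. -/
def wcountF {A F : Type} (w : Word A F) : ℕ := (wForms w).length

/-- A history: in every prefix, every agent has received at most as many
messages as have been sent. -/
def IsHistory {A F : Type} [DecidableEq A] (w : Word A F) : Prop :=
  ∀ β : Word A F, β <+: w → ∀ a : A, wcountA β a ≤ wcountF β

/-- `α↾_{!a}`: the formulas of `α` that agent `a` has read, i.e. the restriction
of `α↾_!` to its first `|α|_a` elements. -/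
def wRead {A F : Type} [DecidableEq A] (w : Word A F) (a : A) : List F :=
  (wForms w).take (wcountA w a)

/-- The view relation `α ▷_a β`: `β` is a history with `β↾_! = β↾_{!a} = α↾_{!a}`. -/
def View {A F : Type} [DecidableEq A] (a : A) (α β : Word A F) : Prop :=
  IsHistory β ∧ wForms β = wRead β a ∧ wRead β a = wRead α a

/-- Formulas of the language `L_aa`. -/
inductive Form (P A : Type) : Type where
  | atom : P → Form P A
  | top  : Form P A
  | neg  : Form P A → Form P A
  | or   : Form P A → Form P A → Form P A
  | kdia : A → Form P A → Form P A            -- `K̂_a φ`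
  | ann  : Form P A → Form P A → Form P A     -- `⟨ψ⟩φ`
  | recv : A → Form P A → Form P A            -- `⟨a⟩φ`

/-- Modal depth `deg`. -/
def deg {P A : Type} : Form P A → ℕ
  | .atom _ => 0
  | .top => 0
  | .neg φ => deg φ
  | .or φ ψ => max (deg φ) (deg ψ)
  | .kdia _ φ => deg φ + 1
  | .ann ψ φ => deg ψ + deg φ
  | .recv _ φ => deg φ

/-- Size `‖φ‖` of a formula. -/
def fsize {P A : Type} : Form P A → ℕ
  | .atom _ => 2
  | .top => 1
  | .neg φ => fsize φ + 1
  | .or φ ψ => fsize φ + fsize ψ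
  | .kdia _ φ => fsize φ + 1
  | .ann ψ φ => 2 * fsize ψ + fsize φ
  | .recv _ φ => fsize φ + 2

/-- `⟨α⟩φ`: prefixing `φ` with the dynamic modalities of the letters of `α`. -/
def diaWord {P A : Type} : Word A (Form P A) → Form P A → Form P A
  | [], φ => φ
  | Sum.inl a :: rest, φ => .recv a (diaWord rest φ)
  | Sum.inr χ :: rest, φ => .ann χ (diaWord rest φ)

/-- `[α]φ := ¬⟨α⟩¬φ`. -/
def boxWord {P A : Type} (α : Word A (Form P A)) (φ : Form P A) : Form P A :=
  .neg (diaWord α (.neg φ))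

/-- `⊥ := ¬⊤`. -/
def fBot {P A : Type} : Form P A := .neg .top

/-- Size `‖α‖` of a word. -/
def sizeW {P A : Type} (w : Word A (Form P A)) : ℕ :=
  (w.map (fun l => match l with | Sum.inl _ => 1 | Sum.inr φ => fsize φ)).sum

lemma fsize_pos {P A : Type} (φ : Form P A) : 1 ≤ fsize φ := by
  induction φ <;> simp [fsize] <;> omega

def degW {P A : Type} (w : Word A (Form P A)) : ℕ := ((wForms w).map deg).sum

lemma degW_append {P A : Type} (v w : Word A (Form P A)) :
    degW (v ++ w) = degW v + degW w := by
  simp [degW, wForms, List.filterMap_append]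

lemma sizeW_append {P A : Type} (v w : Word A (Form P A)) :
    sizeW (v ++ w) = sizeW v + sizeW w := by
  simp [sizeW]

lemma eq_dropLast_concat {γ : Type} {l : List γ} {x : γ} (h : l.getLast? = some x) :
    l = l.dropLast ++ [x] := by
  cases l with
  | nil => simp at h
  | cons y ys =>
    have hne : y :: ys ≠ [] := by simp
    rw [List.getLast?_eq_some_getLast hne] at h
    obtain rfl : (y :: ys).getLast hne = x := by injection h
    exact (List.dropLast_append_getLast hne).symm

lemma degW_view_le {P A : Type} [DecidableEq A] {a : A} {α β : Word A (Form P A)}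
    (h : View a α β) : degW β ≤ degW α := by
  obtain ⟨-, h1, h2⟩ := h
  have : degW β = (((wForms α).map deg).take (wcountA α a)).sum := by
    rw [degW, h1, h2, wRead, List.map_take]
  rw [this]
  calc (((wForms α).map deg).take (wcountA α a)).sum
      ≤ (((wForms α).map deg).take (wcountA α a)).sum
        + (((wForms α).map deg).drop (wcountA α a)).sum := Nat.le_add_right _ _
    _ = degW α := by rw [← List.sum_append, List.take_append_drop]; rfl

lemma degW_single_inl {P A : Type} (a : A) : degW ([Sum.inl a] : Word A (Form P A)) = 0 := by
  simp [degW, wForms, List.filterMap_cons]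

lemma degW_single_inr {P A : Type} (φ : Form P A) :
    degW ([Sum.inr φ] : Word A (Form P A)) = deg φ := by
  simp [degW, wForms]

lemma sizeW_single_inl {P A : Type} (a : A) : sizeW ([Sum.inl a] : Word A (Form P A)) = 1 := by
  simp [sizeW]

lemma sizeW_single_inr {P A : Type} (φ : Form P A) :
    sizeW ([Sum.inr φ] : Word A (Form P A)) = fsize φ := by
  simp [sizeW]

lemma lexHelp {x1 y1 x2 y2 : ℕ} (h : x1 < x2 ∨ (x1 = x2 ∧ y1 < y2)) :
    Prod.Lex (· < ·) (· < ·) (x1, y1) (x2, y2) := by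
  rcases h with h | ⟨h, h2⟩
  · exact Prod.Lex.left _ _ h
  · subst h; exact Prod.Lex.right _ h2

/-- An epistemic model. -/
structure Model (P A W : Type) where
  rel : A → W → W → Prop
  val : P → W → Prop

mutual
/-- The executability (agreement) relation `s ⋈ α`. -/
def Exec {P A W : Type} [DecidableEq A] (M : Model P A W) (s : W)
    (α : Word A (Form P A)) : Prop :=
  match h : α.getLast? with
  | none => True
  | some (Sum.inl a) => Exec M s α.dropLast ∧ wcountA α.dropLast a < wcountF α.dropLast
  | some (Sum.inr φ) => Exec M s α.dropLast ∧ Sat M s α.dropLast φ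
termination_by (degW α, 2 * sizeW α + 1)
decreasing_by
  all_goals
    have hc := eq_dropLast_concat h
    generalize hγ : α.dropLast = γ at hc ⊢
    subst hc
    refine lexHelp ?_
    simp only [degW_append, sizeW_append, degW_single_inl, degW_single_inr,
      sizeW_single_inl, sizeW_single_inr, true_and, and_true]
    first
      | omega
      | (have h1 := fsize_pos φ; omega)

/-- The satisfaction relation `s, α ⊨ φ`. -/
def Sat {P A W : Type} [DecidableEq A] (M : Model P A W) (s : W)
    (α : Word A (Form P A)) : Form P A → Prop
  | .atom p => Exec M s α ∧ M.val p s
  | .top => Exec M s α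
  | .neg φ => Exec M s α ∧ ¬ Sat M s α φ
  | .or φ ψ => Sat M s α φ ∨ Sat M s α ψ
  | .kdia a φ => Exec M s α ∧
      ∃ (t : W) (β : Word A (Form P A)) (_ : M.rel a s t) (_ : View a α β),
        Exec M t β ∧ Sat M t β φ
  | .recv a φ => wcountA α a < wcountF α ∧ Sat M s (α ++ [Sum.inl a]) φ
  | .ann φ ψ => Sat M s α φ ∧ Sat M s (α ++ [Sum.inr φ]) ψ
termination_by φ => (degW α + deg φ, 2 * sizeW α + 2 * fsize φ)
decreasing_by
  all_goals
    refine lexHelp ?_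
    simp only [deg, fsize, degW_append, sizeW_append, degW_single_inl,
      degW_single_inr, sizeW_single_inl, sizeW_single_inr, true_and, and_true]
    first
      | omega
      | (have hv := degW_view_le ‹View _ _ _›; omega)
      | (have h1 := fsize_pos φ; omega)
      | (have h1 := fsize_pos ψ; omega)
      | (have h1 := fsize_pos φ; have h2 := fsize_pos ψ; omega)
end

/-- `φ` is `ε`-valid (valid): true at every state of every epistemic model under
the empty history. -/
def EValid (P A : Type) [DecidableEq A] (φ : Form P A) : Prop :=
  ∀ (W : Type) [Nonempty W] (M : Model P A W) (s : W), Sat M s [] φ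

/-- `φ` is `∗`-valid (always valid): `[α]φ` is `ε`-valid for every word `α`. -/
def SValid (P A : Type) [DecidableEq A] (φ : Form P A) : Prop :=
  ∀ α : Word A (Form P A), EValid P A (boxWord α φ)

/-- `φ ∧ ψ := ¬(¬φ ∨ ¬ψ)`. -/
def landF {P A : Type} (φ ψ : Form P A) : Form P A := .neg (.or (.neg φ) (.neg ψ))

/-- Conjunction of a list of formulas. -/
def bigAnd {P A : Type} (l : List (Form P A)) : Form P A := l.foldr landF .top

/-- `K_a φ := ¬K̂_a ¬φ`. -/
def KformF {P A : Type} (a : A) (φ : Form P A) : Form P A := .neg (.kdia a (.neg φ))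

/-- `[a]φ := ¬⟨a⟩¬φ`. -/
def boxAg {P A : Type} (a : A) (φ : Form P A) : Form P A := .neg (.recv a (.neg φ))

/-- `empty := ⋀_{a∈A}[a]⊥ ∧ ⋀_{a,b∈A} K_a[b]⊥`. -/
noncomputable def emptyF (P A : Type) [Fintype A] : Form P A :=
  landF (bigAnd ((Finset.univ : Finset A).toList.map fun a => boxAg a fBot))
    (bigAnd ((Finset.univ : Finset A).toList.flatMap fun a =>
      (Finset.univ : Finset A).toList.map fun b => KformF a (boxAg b fBot)))

/-! At history `α`, the formula `empty` says that every agent has read every announcement of `α`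
and that no agent considers possible a history in which some agent still has something to read.
If `α ≠ ε` is executable and satisfies this, some announcement has been made. For agents `a ≠ b`,
cut `α` just before the last reception by `a` or `b`: in that prefix `β` one of them, `c`, has read
everything while the other, `d`, has not, so `β` is a `c`-view of `α` executable at `s`, and
reflexivity of `∼_c` contradicts `K_c [d]⊥`. -/

section Words

variable {A F : Type}

@[simp] lemma wcountF_append (v w : Word A F) : wcountF (v ++ w) = wcountF v + wcountF w := by
  simp [wcountF, wForms]

@[simp] lemma wcountF_singleton_inl (a : A) : wcountF ([Sum.inl a] : Word A F) = 0 := rfl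

@[simp] lemma wcountF_singleton_inr (φ : F) : wcountF ([Sum.inr φ] : Word A F) = 1 := rfl

lemma wForms_prefix {v w : Word A F} (h : v <+: w) : wForms v <+: wForms w := by
  obtain ⟨t, rfl⟩ := h
  simp only [wForms, List.filterMap_append]
  exact List.prefix_append _ _

lemma wcountF_le_of_prefix {v w : Word A F} (h : v <+: w) : wcountF v ≤ wcountF w :=
  (wForms_prefix h).length_le

variable [DecidableEq A]

@[simp] lemma wcountA_nil (c : A) : wcountA ([] : Word A F) c = 0 := rfl

@[simp] lemma wcountA_append (v w : Word A F) (c : A) :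
    wcountA (v ++ w) c = wcountA v c + wcountA w c := by
  simp [wcountA, wAgents]

@[simp] lemma wcountA_singleton_inl (a c : A) :
    wcountA ([Sum.inl a] : Word A F) c = if a = c then 1 else 0 := by
  simp [wcountA, wAgents, List.count_singleton]

@[simp] lemma wcountA_singleton_inr (φ : F) (c : A) : wcountA ([Sum.inr φ] : Word A F) c = 0 :=
  rfl

lemma wcountA_le_of_prefix {v w : Word A F} (h : v <+: w) (c : A) :
    wcountA v c ≤ wcountA w c := by
  obtain ⟨t, rfl⟩ := h
  simp

lemma eq_nil_of_wcountF_eq_zero {w : Word A F} (hF : wcountF w = 0)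
    (hA : ∀ c, wcountA w c = 0) : w = [] := by
  obtain _ | ⟨a | φ, w⟩ := w
  · rfl
  · simpa [wcountA, wAgents] using hA a
  · simp [wcountF, wForms] at hF

lemma exists_prefix_wcountA_eq_and_lt {a b : A} (hab : a ≠ b) {n : ℕ} (hn : 0 < n) {w : Word A F}
    (ha : wcountA w a = n) (hb : wcountA w b = n) :
    ∃ β, β <+: w ∧ ∃ c d, wcountA β c = n ∧ wcountA β d < n := by
  induction w using List.reverseRecOn with
  | nil => exact absurd ha hn.ne
  | append_singleton w x ih =>
    have hw : w <+: w ++ [x] := List.prefix_append _ _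
    simp only [wcountA_append] at ha hb
    rcases x with c | φ
    · simp only [wcountA_singleton_inl] at ha hb
      split_ifs at ha hb with hca hcb hcb
      · exact absurd (hca.symm.trans hcb) hab
      · exact ⟨w, hw, b, a, hb.trans (add_zero _), by omega⟩
      · exact ⟨w, hw, a, b, ha.trans (add_zero _), by omega⟩
      · obtain ⟨β, hβ, h⟩ := ih ha hb
        exact ⟨β, hβ.trans hw, h⟩
    · simp only [wcountA_singleton_inr, add_zero] at ha hb
      obtain ⟨β, hβ, h⟩ := ih ha hb
      exact ⟨β, hβ.trans hw, h⟩

lemma IsHistory.of_prefix {v w : Word A F} (h : IsHistory w) (hv : v <+: w) : IsHistory v :=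
  fun β hβ c => h β (hβ.trans hv) c

lemma IsHistory.wcountA_le {w : Word A F} (h : IsHistory w) (c : A) : wcountA w c ≤ wcountF w :=
  h w (List.prefix_refl w) c

lemma IsHistory.append_singleton {w : Word A F} {x : A ⊕ F} (h : IsHistory w)
    (hx : ∀ c, wcountA (w ++ [x]) c ≤ wcountF (w ++ [x])) : IsHistory (w ++ [x]) := by
  intro β hβ c
  rcases List.prefix_concat_iff.mp hβ with rfl | hβ
  · exact hx c
  · exact h β hβ c

lemma view_of_prefix {α β : Word A F} {c : A} (hα : IsHistory α) (hβ : β <+: α)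
    (hc : wcountF α ≤ wcountA β c) : View c α β := by
  have hβhist := hα.of_prefix hβ
  have hforms : wForms β = wForms α :=
    (wForms_prefix hβ).eq_of_length (le_antisymm (wcountF_le_of_prefix hβ)
      (hc.trans (hβhist.wcountA_le c)))
  have hreadβ : wRead β c = wForms β :=
    List.take_of_length_le (by rw [hforms]; exact hc)
  have hreadα : wRead α c = wForms α :=
    List.take_of_length_le (hc.trans (wcountA_le_of_prefix hβ c))
  exact ⟨hβhist, hreadβ.symm, by rw [hreadβ, hreadα, hforms]⟩

end Words

section Semantics

variable {P A W : Type} [DecidableEq A] (M : Model P A W) (s : W)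

lemma exec_nil : Exec M s ([] : Word A (Form P A)) := by
  rw [Exec]; simp

lemma exec_append_inl (γ : Word A (Form P A)) (a : A) :
    Exec M s (γ ++ [Sum.inl a]) ↔ Exec M s γ ∧ wcountA γ a < wcountF γ := by
  rw [Exec]
  split <;> rename_i h <;> rw [List.getLast?_concat] at h <;>
    simp only [Option.some.injEq, Sum.inl.injEq, reduceCtorEq] at h
  subst h
  rw [List.dropLast_concat]

lemma exec_append_inr (γ : Word A (Form P A)) (φ : Form P A) :
    Exec M s (γ ++ [Sum.inr φ]) ↔ Exec M s γ ∧ Sat M s γ φ := by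
  rw [Exec]
  split <;> rename_i h <;> rw [List.getLast?_concat] at h <;>
    simp only [Option.some.injEq, Sum.inr.injEq, reduceCtorEq] at h
  subst h
  rw [List.dropLast_concat]

variable {M s}

lemma Exec.of_append_singleton {γ : Word A (Form P A)} {x : A ⊕ Form P A}
    (h : Exec M s (γ ++ [x])) : Exec M s γ := by
  rcases x with a | φ
  · exact ((exec_append_inl M s γ a).1 h).1
  · exact ((exec_append_inr M s γ φ).1 h).1

lemma Exec.of_prefix {α γ : Word A (Form P A)} (h : Exec M s α) (hγ : γ <+: α) :
    Exec M s γ := by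
  induction α using List.reverseRecOn with
  | nil => rw [List.prefix_nil.1 hγ]; exact h
  | append_singleton α x ih =>
    rcases List.prefix_concat_iff.1 hγ with rfl | hγ
    · exact h
    · exact ih h.of_append_singleton hγ

lemma Exec.isHistory {α : Word A (Form P A)} (h : Exec M s α) : IsHistory α := by
  induction α using List.reverseRecOn with
  | nil => intro β hβ c; simp [List.prefix_nil.1 hβ]
  | append_singleton α x ih =>
    have hα := ih h.of_append_singleton
    refine hα.append_singleton fun c => ?_
    have hc := hα.wcountA_le c
    rcases x with a | φ
    · have ha := ((exec_append_inl M s α a).1 h).2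
      simp only [wcountA_append, wcountA_singleton_inl, wcountF_append, wcountF_singleton_inl]
      split_ifs with hac
      · subst hac; omega
      · omega
    · simp only [wcountA_append, wcountA_singleton_inr, wcountF_append, wcountF_singleton_inr]
      omega

variable (M s)

lemma sat_neg (γ : Word A (Form P A)) (φ : Form P A) :
    Sat M s γ (.neg φ) ↔ Exec M s γ ∧ ¬ Sat M s γ φ := by rw [Sat]

lemma sat_top (γ : Word A (Form P A)) : Sat M s γ (.top : Form P A) ↔ Exec M s γ := by rw [Sat]

lemma sat_or (γ : Word A (Form P A)) (φ ψ : Form P A) :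
    Sat M s γ (.or φ ψ) ↔ Sat M s γ φ ∨ Sat M s γ ψ := by rw [Sat]

lemma sat_recv (γ : Word A (Form P A)) (a : A) (φ : Form P A) :
    Sat M s γ (.recv a φ) ↔ wcountA γ a < wcountF γ ∧ Sat M s (γ ++ [Sum.inl a]) φ := by
  rw [Sat]

lemma sat_ann (γ : Word A (Form P A)) (φ ψ : Form P A) :
    Sat M s γ (.ann φ ψ) ↔ Sat M s γ φ ∧ Sat M s (γ ++ [Sum.inr φ]) ψ := by rw [Sat]

lemma sat_kdia (γ : Word A (Form P A)) (a : A) (φ : Form P A) :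
    Sat M s γ (.kdia a φ) ↔ Exec M s γ ∧
      ∃ (t : W) (β : Word A (Form P A)) (_ : M.rel a s t) (_ : View a γ β),
        Exec M t β ∧ Sat M t β φ := by rw [Sat]

lemma sat_append_of_sat_diaWord (φ : Form P A) :
    ∀ {α β : Word A (Form P A)}, Sat M s β (diaWord α φ) → Sat M s (β ++ α) φ
  | [], β, h => by simpa [diaWord] using h
  | Sum.inl a :: α, β, h => by
    simpa using sat_append_of_sat_diaWord φ ((sat_recv M s β a _).1 h).2
  | Sum.inr χ :: α, β, h => by
    simpa using sat_append_of_sat_diaWord φ ((sat_ann M s β χ _).1 h).2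

lemma sat_landF (γ : Word A (Form P A)) (φ ψ : Form P A) :
    Sat M s γ (landF φ ψ) ↔ Exec M s γ ∧ Sat M s γ φ ∧ Sat M s γ ψ := by
  rw [landF, sat_neg, sat_or, sat_neg, sat_neg]
  tauto

lemma sat_bigAnd (γ : Word A (Form P A)) (l : List (Form P A)) :
    Sat M s γ (bigAnd l) ↔ Exec M s γ ∧ ∀ φ ∈ l, Sat M s γ φ := by
  induction l with
  | nil => simp [bigAnd, sat_top]
  | cons φ l ih =>
    rw [bigAnd, List.foldr_cons, ← bigAnd, sat_landF, ih, List.forall_mem_cons]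
    tauto

lemma sat_boxAg_fBot (γ : Word A (Form P A)) (c : A) :
    Sat M s γ (boxAg c fBot) ↔ Exec M s γ ∧ wcountF γ ≤ wcountA γ c := by
  simp only [boxAg, fBot, sat_neg, sat_recv, sat_top, exec_append_inl]
  by_cases h : Exec M s γ <;> simp [h]

lemma sat_KformF_boxAg_fBot (γ : Word A (Form P A)) (a b : A) :
    Sat M s γ (KformF a (boxAg b fBot)) ↔ Exec M s γ ∧
      ∀ t β, M.rel a s t → View a γ β → Exec M t β → wcountF β ≤ wcountA β b := by
  simp only [KformF, sat_neg, sat_kdia, sat_boxAg_fBot]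
  grind

end Semantics

lemma sat_emptyF {P A W : Type} [DecidableEq A] [Fintype A] (M : Model P A W) (s : W)
    (γ : Word A (Form P A)) :
    Sat M s γ (emptyF P A) ↔ Exec M s γ ∧ (∀ c, wcountF γ ≤ wcountA γ c) ∧
      ∀ a b t β, M.rel a s t → View a γ β → Exec M t β → wcountF β ≤ wcountA β b := by
  simp only [emptyF, sat_landF, sat_bigAnd, List.forall_mem_map, List.forall_mem_flatMap,
    Finset.mem_toList, Finset.mem_univ, forall_const, sat_boxAg_fBot, sat_KformF_boxAg_fBot]
  grind

lemma sat_emptyF_nil {P A W : Type} [DecidableEq A] [Fintype A] (M : Model P A W) (s : W) :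
    Sat M s [] (emptyF P A) := by
  refine (sat_emptyF M s []).2 ⟨exec_nil M s, fun c => le_refl 0, ?_⟩
  rintro a b t β - ⟨-, hforms, hread⟩ -
  have : wForms β = [] := hforms.trans hread
  simp [wcountF, this]

/-- With at least two agents, `s,ε ⊨ ⟨α⟩ empty` iff `α = ε`. -/
theorem stmt14 {P A : Type} [DecidableEq A] [Fintype A] (hA : ∃ a b : A, a ≠ b)
    {W : Type} [Nonempty W] (M : Model P A W) (hEq : ∀ a : A, Equivalence (M.rel a))
    (s : W) (α : Word A (Form P A)) :
    Sat M s [] (diaWord α (emptyF P A)) ↔ α = [] := by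
  refine ⟨fun h => ?_, by rintro rfl; exact sat_emptyF_nil M s⟩
  obtain ⟨hexec, hread, hknow⟩ :=
    (sat_emptyF M s α).1 (by simpa using sat_append_of_sat_diaWord M s _ h)
  have hhist := hexec.isHistory
  have hall (c : A) : wcountA α c = wcountF α := le_antisymm (hhist.wcountA_le c) (hread c)
  by_contra hne
  have hpos : 0 < wcountF α := Nat.pos_of_ne_zero fun h0 =>
    hne (eq_nil_of_wcountF_eq_zero h0 fun c => (hall c).trans h0)
  obtain ⟨a, b, hab⟩ := hA
  obtain ⟨β, hβ, c, d, hc, hd⟩ := exists_prefix_wcountA_eq_and_lt hab hpos (hall a) (hall b)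
  have hFβ := (hhist.of_prefix hβ).wcountA_le c
  have := hknow c d s β ((hEq c).refl s) (view_of_prefix hhist hβ hc.ge) (hexec.of_prefix hβ)
  omega
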